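/- Let n be an odd positive integer, let k be a positive integer with 2^k < n < 2^(k+1), and let a = n − 2^k. Then there exists an orientation of the n-cube in which every vertex has in-degree a or n. -/

import Mathlib

/-- Flip coordinate `i` of a binary `n`-tuple. -/
def flipBit {n : ℕ} (v : Fin n → ZMod 2) (i : Fin n) : Fin n → ZMod 2 :=
  Function.update v i (v i + 1)

/-- An orientation of the `n`-cube: to each edge (a pair of vertices differing in
exactly one coordinate) we assign a head, one of its two endpoints.  The edge at
vertex `v` in direction `i` joins `v` and `flipBit v i`; `head v i` is the
assigned head of that edge, which must be one of the endpoints and must not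
depend on from which endpoint the edge is viewed. -/
structure CubeOrientation (n : ℕ) where
  head : (Fin n → ZMod 2) → Fin n → (Fin n → ZMod 2)
  head_mem : ∀ v i, head v i = v ∨ head v i = flipBit v i
  compatible : ∀ v i, head (flipBit v i) i = head v i

/-- The in-degree of a vertex `v`: the number of edges incident to `v`
whose head is `v`. -/
def CubeOrientation.inDeg {n : ℕ} (o : CubeOrientation n) (v : Fin n → ZMod 2) : ℕ :=
  (Finset.univ.filter fun i : Fin n => o.head v i = v).card

/-!
Colour the vertices of the cube by parity and embed a group `G = (ZMod 2)^k` into the set of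
directions by `e`. Label each vertex `v` by `cubeLabel e v = ∑ₓ v (e x) • x ∈ G`, and mark
the edge in direction `i` when `i = e x` for some `x` and the label of its odd endpoint lies
in a fixed `T ⊆ G`. Orient marked edges towards their even endpoint and all other edges
towards their odd endpoint. From an even vertex `u`, the edges in the directions `e x` reach
the odd vertices with labels `cubeLabel e u + x`, so exactly `#T` of its edges are marked. At
an odd vertex `w` the marking depends only on whether `cubeLabel e w ∈ T`, so its in-degree
is `n - #G` or `n`. Taking `#G = 2 ^ k` and `#T = n - 2 ^ k` gives the theorem.
-/

open Finset

section FlipBit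

variable {n : ℕ}

lemma flipBit_flipBit (v : Fin n → ZMod 2) (i : Fin n) : flipBit (flipBit v i) i = v := by
  ext j
  rcases eq_or_ne j i with rfl | hji
  · simp only [flipBit, Function.update_self, add_assoc, ZModModule.add_self, add_zero]
  · simp only [flipBit, Function.update_of_ne hji]

lemma flipBit_ne_self (v : Fin n → ZMod 2) (i : Fin n) : flipBit v i ≠ v := fun h => by
  simpa [flipBit] using congrFun h i

lemma sum_flipBit_apply {ι M : Type*} [Fintype ι] [AddCommMonoid M] [Module (ZMod 2) M]
    (e : ι ↪ Fin n) (v : Fin n → ZMod 2) (x : ι) (f : ι → M) :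
    ∑ y, flipBit v (e x) (e y) • f y = ∑ y, v (e y) • f y + f x := by
  classical
  have hy : ∀ y, flipBit v (e x) (e y) • f y = v (e y) • f y + if y = x then f x else 0 := by
    intro y
    rcases eq_or_ne y x with rfl | hyx
    · simp [flipBit, add_smul]
    · simp [flipBit, hyx]
  simp only [hy, sum_add_distrib, sum_ite_eq', mem_univ, if_true]

end FlipBit

namespace CubeOrientation

variable {n : ℕ}

def ofToward (toward : (Fin n → ZMod 2) → Fin n → Prop) [∀ v i, Decidable (toward v i)]
    (h : ∀ v i, toward (flipBit v i) i ↔ ¬ toward v i) : CubeOrientation n where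
  head v i := if toward v i then v else flipBit v i
  head_mem v i := by split_ifs <;> simp
  compatible v i := by
    by_cases hv : toward v i <;> simp [hv, h, flipBit_flipBit]

lemma inDeg_ofToward (toward : (Fin n → ZMod 2) → Fin n → Prop)
    [∀ v i, Decidable (toward v i)] (h : ∀ v i, toward (flipBit v i) i ↔ ¬ toward v i) (v : Fin n → ZMod 2) :
    (ofToward toward h).inDeg v = #{i | toward v i} := by
  unfold inDeg ofToward
  dsimp only
  congr 1
  refine filter_congr fun i _ => ?_
  split_ifs with hv <;> simp [hv, flipBit_ne_self]

end CubeOrientation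

section MarkedOrientation

variable {n : ℕ}

def cubeParity (v : Fin n → ZMod 2) : ZMod 2 := ∑ i, v i

lemma cubeParity_flipBit_eq_one_iff (v : Fin n → ZMod 2) (i : Fin n) :
    cubeParity (flipBit v i) = 1 ↔ cubeParity v ≠ 1 := by
  have h := sum_flipBit_apply (Function.Embedding.refl _) v i (1 : Fin n → ZMod 2)
  simp only [Function.Embedding.refl_apply, Pi.one_apply, smul_eq_mul, mul_one] at h
  rw [cubeParity, cubeParity, h]
  generalize ∑ j, v j = p
  revert p
  decide

def oddEnd (v : Fin n → ZMod 2) (i : Fin n) : Fin n → ZMod 2 :=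
  if cubeParity v = 1 then v else flipBit v i

lemma oddEnd_flipBit (v : Fin n → ZMod 2) (i : Fin n) : oddEnd (flipBit v i) i = oddEnd v i := by
  by_cases hv : cubeParity v = 1 <;>
    simp [oddEnd, hv, cubeParity_flipBit_eq_one_iff, flipBit_flipBit]

variable {G : Type*} [AddCommGroup G] [Module (ZMod 2) G] [Fintype G]
  (e : G ↪ Fin n) (T : Finset G)

def cubeLabel (v : Fin n → ZMod 2) : G := ∑ x, v (e x) • x

lemma cubeLabel_flipBit (v : Fin n → ZMod 2) (x : G) :
    cubeLabel e (flipBit v (e x)) = cubeLabel e v + x :=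
  sum_flipBit_apply e v x id

def IsMarked (v : Fin n → ZMod 2) (i : Fin n) : Prop :=
  ∃ x, e x = i ∧ cubeLabel e (oddEnd v i) ∈ T

lemma isMarked_flipBit (v : Fin n → ZMod 2) (i : Fin n) :
    IsMarked e T (flipBit v i) i ↔ IsMarked e T v i := by
  simp only [IsMarked, oddEnd_flipBit]

variable [DecidableEq G]

instance (v : Fin n → ZMod 2) (i : Fin n) : Decidable (IsMarked e T v i) := by
  unfold IsMarked
  infer_instance

def markedOrientation : CubeOrientation n :=
  .ofToward (fun v i => cubeParity v = 1 ↔ ¬ IsMarked e T v i) fun v i => by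
    rw [cubeParity_flipBit_eq_one_iff, isMarked_flipBit]
    tauto

lemma card_isMarked_of_even {u : Fin n → ZMod 2} (hu : cubeParity u ≠ 1) :
    #{i | IsMarked e T u i} = #T := by
  have hmap : ({i | IsMarked e T u i} : Finset (Fin n)) =
      ({x | cubeLabel e u + x ∈ T} : Finset G).map e := by
    ext i
    simp only [IsMarked, oddEnd, hu, if_false, mem_filter, mem_univ, true_and, mem_map]
    constructor
    · rintro ⟨x, rfl, hx⟩
      exact ⟨x, by rwa [← cubeLabel_flipBit], rfl⟩
    · rintro ⟨x, hx, rfl⟩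
      exact ⟨x, rfl, by rwa [cubeLabel_flipBit]⟩
  rw [hmap, card_map, ← card_vadd_finset (-cubeLabel e u) T]
  congr 1
  ext x
  simp [mem_neg_vadd_finset_iff]

lemma card_not_isMarked_of_odd {w : Fin n → ZMod 2} (hw : cubeParity w = 1) :
    #{i | ¬ IsMarked e T w i} = if cubeLabel e w ∈ T then n - Fintype.card G else n := by
  split_ifs with hT
  · have hcompl : ({i | ¬ IsMarked e T w i} : Finset (Fin n)) = (univ.map e)ᶜ := by
      ext i
      simp [IsMarked, oddEnd, hw, hT]
    rw [hcompl, card_compl, card_map, card_univ, Fintype.card_fin]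
  · simp [IsMarked, oddEnd, hw, hT]

lemma inDeg_markedOrientation (v : Fin n → ZMod 2) :
    (markedOrientation e T).inDeg v = #T ∨
      (markedOrientation e T).inDeg v = n - Fintype.card G ∨
      (markedOrientation e T).inDeg v = n := by
  rw [markedOrientation, CubeOrientation.inDeg_ofToward]
  by_cases hv : cubeParity v = 1
  · simp only [hv, true_iff]
    rw [card_not_isMarked_of_odd e T hv]
    split_ifs <;> simp
  · simp only [hv, false_iff, not_not]
    exact .inl (card_isMarked_of_even e T hv)

end MarkedOrientation

theorem primitive_orientation_exists_general (n k : ℕ)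
    (h1 : 2 ^ k < n) (h2 : n < 2 ^ (k + 1)) (a : ℕ) (ha : a = n - 2 ^ k) :
    ∃ o : CubeOrientation n, ∀ v, o.inDeg v = a ∨ o.inDeg v = n := by
  have hcard : Fintype.card (Fin k → ZMod 2) = 2 ^ k := by simp
  have ha_le : a ≤ 2 ^ k := by rw [pow_succ] at h2; omega
  obtain ⟨e⟩ : Nonempty ((Fin k → ZMod 2) ↪ Fin n) :=
    Function.Embedding.nonempty_of_card_le (by rw [hcard, Fintype.card_fin]; omega)
  obtain ⟨T, -, hT⟩ : ∃ T ⊆ (univ : Finset (Fin k → ZMod 2)), #T = a :=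
    exists_subset_card_eq (by rwa [card_univ, hcard])
  refine ⟨markedOrientation e T, fun v => ?_⟩
  rcases inDeg_markedOrientation e T v with h | h | h
  · exact .inl (h.trans hT)
  · exact .inl (by rw [h, hcard, ha])
  · exact .inr h

theorem primitive_orientation_exists (n k : ℕ) (hodd : Odd n) (hk : 0 < k)
    (h1 : 2 ^ k < n) (h2 : n < 2 ^ (k + 1)) (a : ℕ) (ha : a = n - 2 ^ k) :
    ∃ o : CubeOrientation n, ∀ v, o.inDeg v = a ∨ o.inDeg v = n :=
  primitive_orientation_exists_general n k h1 h2 a ha
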